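/- Consider a multi-hop channel with nodes 0, 1, …, n+1 (node 0 the source, nodes 1,…,n relays, node n+1 the destination). Let E_0, …, E_n : [0,∞) → [0,∞) be nondecreasing harvested-energy curves (E_i at node i) with E_n bounded on every compact interval, let B_s : [0,∞) → [0,∞) be nondecreasing, and let r_0, …, r_n be rate functions (r_i for the hop from node i to node i+1) with lim_{p→∞} r_n(p)/p = 0. For T > 0, define D(T) as the supremum of ∫₀ᵀ r_n(p_n(t)) dt over all multi-hop feasible tuples (p_0, …, p_n) on [0,T]. Then D is nondecreasing and continuous on (0,∞); moreover, for B₀ > 0, if C = {t > 0 : D(t) = B₀} is nonempty, then T_min := inf C is attained and equals inf{ T > 0 : D(T) ≥ B₀ }, i.e., T_min is the minimum completion time for delivering B₀ units of data to the destination. -/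

import Mathlib

/-!
Silencing every node after `T₁` keeps a policy feasible on any longer horizon, so `D` is
monotone. Conversely, a policy on `[0, T₂]` restricted to `[0, T₁]` loses only
`∫_{T₁}^{T₂} r_n(p_n)`. Concavity of `r_n` and `r_n 0 = 0` give `r_n x ≤ r_n a + (r_n a / a) x`
for every `a > 0`, so this loss is at most `(T₂ - T₁) r_n a + (r_n a / a) E_n T₂`; taking `a`
large (sublinearity of `r_n`) and then `T₂ - T₁` small yields continuity of `D` on `[0, ∞)`.
As `D 0 = 0 < B₀`, the level set `{D = B₀}` is closed in `[0, ∞)` and misses `0`, so it contains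
its infimum, which by monotonicity is also the least `T` with `B₀ ≤ D T`.
-/

open MeasureTheory Set Filter intervalIntegral

noncomputable section

/-- A rate function: continuous, strictly increasing, concave on `[0,∞)`,
vanishing at `0` and tending to `∞`. -/
def IsRateFunction (r : ℝ → ℝ) : Prop :=
  ContinuousOn r (Set.Ici 0) ∧ StrictMonoOn r (Set.Ici 0) ∧
    ConcaveOn ℝ (Set.Ici 0) r ∧ r 0 = 0 ∧
    Filter.Tendsto r Filter.atTop Filter.atTop

/-- Multi-hop feasibility of a tuple of power policies `p 0, …, p n` on `[0,T]`
for a chain with `n` relays: node `i` transmits with power policy `p i` over the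
hop with rate function `r i`, using harvested energy `E i`; `Bs` is the arrival
data curve at the source (node `0`). -/
def MultiHopFeasible (n : ℕ) (T : ℝ) (E : ℕ → ℝ → ℝ) (Bs : ℝ → ℝ)
    (r : ℕ → ℝ → ℝ) (p : ℕ → ℝ → ℝ) : Prop :=
  (∀ i ≤ n, IntervalIntegrable (p i) MeasureTheory.volume 0 T) ∧
  (∀ i ≤ n, IntervalIntegrable (fun s => r i (p i s)) MeasureTheory.volume 0 T) ∧
  (∀ i ≤ n, ∀ t ∈ Set.Icc (0:ℝ) T, 0 ≤ p i t) ∧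
  (∀ i ≤ n, ∀ t ∈ Set.Icc (0:ℝ) T, (∫ s in (0:ℝ)..t, p i s) ≤ E i t) ∧
  (∀ t ∈ Set.Icc (0:ℝ) T, (∫ s in (0:ℝ)..t, r 0 (p 0 s)) ≤ Bs t) ∧
  (∀ i : ℕ, i + 1 ≤ n → ∀ t ∈ Set.Icc (0:ℝ) T,
    (∫ s in (0:ℝ)..t, r (i+1) (p (i+1) s)) ≤ ∫ s in (0:ℝ)..t, r i (p i s))

/-- The multi-hop maximum throughput by deadline `T`. -/
def MultiHopThroughput (n : ℕ) (E : ℕ → ℝ → ℝ) (Bs : ℝ → ℝ)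
    (r : ℕ → ℝ → ℝ) (T : ℝ) : ℝ :=
  sSup {x : ℝ | ∃ p : ℕ → ℝ → ℝ, MultiHopFeasible n T E Bs r p ∧
    x = ∫ t in (0:ℝ)..T, r n (p n t)}

open Topology

lemma continuousWithinAt_of_dist_le_mul_add {α β : Type*} [PseudoMetricSpace α]
    [PseudoMetricSpace β] {f : α → β} {s : Set α} {x₀ : α}
    (h : ∀ ε > 0, ∃ C : ℝ, ∀ᶠ x in 𝓝[s] x₀, dist (f x) (f x₀) ≤ C * dist x x₀ + ε) :
    ContinuousWithinAt f s x₀ := by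
  rw [ContinuousWithinAt, Metric.tendsto_nhds]
  intro ε hε
  obtain ⟨C, hC⟩ := h (ε / 2) (half_pos hε)
  have hlim : Tendsto (fun x => C * dist x x₀) (𝓝[s] x₀) (𝓝 0) := by
    have hcont : Continuous fun x => C * dist x x₀ := by fun_prop
    simpa using (hcont.tendsto x₀).mono_left nhdsWithin_le_nhds
  filter_upwards [hC, hlim.eventually (gt_mem_nhds (half_pos hε))] with x hCx hx
  linarith

namespace intervalIntegral

variable {f : ℝ → ℝ} {a b c : ℝ}

lemma integral_indicator_Iic (hab : a ≤ b) (hac : a ≤ c) :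
    ∫ x in a..b, (Iic c).indicator f x = ∫ x in a..min b c, f x := by
  rw [integral_of_le hab, integral_of_le (le_min hab hac),
    setIntegral_indicator measurableSet_Iic, Ioc_inter_Iic]

lemma integral_comp_indicator_Iic {g : ℝ → ℝ} (hg : g 0 = 0) (hab : a ≤ b) (hac : a ≤ c) :
    ∫ x in a..b, g ((Iic c).indicator f x) = ∫ x in a..min b c, g (f x) := by
  rw [← integral_indicator_Iic hab hac]
  exact congrArg (fun h : ℝ → ℝ => ∫ x in a..b, h x) (indicator_comp_of_zero hg).symm

end intervalIntegral

lemma IntervalIntegrable.indicator_Iic {f : ℝ → ℝ} {a b c : ℝ}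
    (hf : IntervalIntegrable f volume a c) (hab : a ≤ b) :
    IntervalIntegrable ((Iic c).indicator f) volume a b := by
  rw [intervalIntegrable_iff_integrableOn_Ioc_of_le hab,
    integrableOn_indicator_iff measurableSet_Iic]
  exact hf.1.mono_set fun x hx => ⟨hx.2.1, hx.1⟩

namespace IsRateFunction

variable {ρ : ℝ → ℝ} (hρ : IsRateFunction ρ)
include hρ

lemma map_zero : ρ 0 = 0 := hρ.2.2.2.1

lemma monotoneOn : MonotoneOn ρ (Ici 0) := hρ.2.1.monotoneOn

lemma nonneg {x : ℝ} (hx : 0 ≤ x) : 0 ≤ ρ x :=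
  hρ.map_zero ▸ hρ.monotoneOn self_mem_Ici hx hx

/-- Concavity and `ρ 0 = 0` make `ρ x / x` nonincreasing, whence this affine majorant. -/
lemma le_add_div_mul {a x : ℝ} (ha : 0 < a) (hx : 0 ≤ x) : ρ x ≤ ρ a + ρ a / a * x := by
  have hslope : 0 ≤ ρ a / a := div_nonneg (hρ.nonneg ha.le) ha.le
  rcases le_or_gt x a with hxa | hax
  · have := hρ.monotoneOn hx ha.le hxa
    nlinarith
  · have h := hρ.2.2.1.slope_anti_adjacent self_mem_Ici (ha.trans hax).le ha hax
    rw [hρ.map_zero, sub_zero, sub_zero, div_le_iff₀ (sub_pos.mpr hax)] at h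
    nlinarith

lemma integral_comp_le {f : ℝ → ℝ} {a T₁ T₂ : ℝ} (ha : 0 < a) (h12 : T₁ ≤ T₂)
    (hf : IntervalIntegrable f volume T₁ T₂)
    (hρf : IntervalIntegrable (fun t => ρ (f t)) volume T₁ T₂)
    (hf0 : ∀ t ∈ Icc T₁ T₂, 0 ≤ f t) :
    ∫ t in T₁..T₂, ρ (f t) ≤ (T₂ - T₁) * ρ a + ρ a / a * ∫ t in T₁..T₂, f t := calc
  ∫ t in T₁..T₂, ρ (f t) ≤ ∫ t in T₁..T₂, (ρ a + ρ a / a * f t) :=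
    integral_mono_on h12 hρf (intervalIntegrable_const.add (hf.const_mul _))
      fun t ht => hρ.le_add_div_mul ha (hf0 t ht)
  _ = (T₂ - T₁) * ρ a + ρ a / a * ∫ t in T₁..T₂, f t := by
    rw [integral_add intervalIntegrable_const (hf.const_mul _), intervalIntegral.integral_const,
      intervalIntegral.integral_const_mul, smul_eq_mul]

end IsRateFunction

section Feasibility

variable {n : ℕ} {E : ℕ → ℝ → ℝ} {Bs : ℝ → ℝ} {r : ℕ → ℝ → ℝ} {p : ℕ → ℝ → ℝ} {T₁ T₂ : ℝ}

lemma multiHopFeasible_zero (hE : ∀ i ≤ n, ∀ t : ℝ, 0 ≤ t → 0 ≤ E i t)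
    (hBs : ∀ t : ℝ, 0 ≤ t → 0 ≤ Bs t) (hr0 : ∀ i ≤ n, r i 0 = 0) (T : ℝ) :
    MultiHopFeasible n T E Bs r 0 := by
  refine ⟨fun i _ => intervalIntegrable_const, fun i hi => ?_, fun i _ t _ => le_rfl,
    fun i hi t ht => ?_, fun t ht => ?_, fun i hi t _ => ?_⟩
  · simp only [Pi.zero_apply, hr0 i hi]
    exact intervalIntegrable_const
  · simpa using hE i hi t ht.1
  · simpa [hr0 0 n.zero_le] using hBs t ht.1
  · simp [hr0 (i + 1) hi, hr0 i (Nat.le_of_succ_le hi)]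

lemma MultiHopFeasible.mono (hp : MultiHopFeasible n T₂ E Bs r p) (h0 : 0 ≤ T₁)
    (h12 : T₁ ≤ T₂) : MultiHopFeasible n T₁ E Bs r p := by
  have hIcc : Icc 0 T₁ ⊆ Icc 0 T₂ := Icc_subset_Icc_right h12
  have huIcc : uIcc 0 T₁ ⊆ uIcc 0 T₂ := by
    rwa [uIcc_of_le h0, uIcc_of_le (h0.trans h12)]
  obtain ⟨hint, hrint, hnonneg, henergy, hsource, hrelay⟩ := hp
  exact ⟨fun i hi => (hint i hi).mono_set huIcc, fun i hi => (hrint i hi).mono_set huIcc,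
    fun i hi t ht => hnonneg i hi t (hIcc ht), fun i hi t ht => henergy i hi t (hIcc ht),
    fun t ht => hsource t (hIcc ht), fun i hi t ht => hrelay i hi t (hIcc ht)⟩

/-- Every node falls silent after `T₁`; the cumulative constraints at time `t` are those of `p`
at time `min t T₁`, and the curves `E i`, `Bs` only grow in between. -/
lemma MultiHopFeasible.indicator_Iic (hE_mono : ∀ i ≤ n, MonotoneOn (E i) (Ici 0))
    (hBs_mono : MonotoneOn Bs (Ici 0)) (hr0 : ∀ i ≤ n, r i 0 = 0)
    (hp : MultiHopFeasible n T₁ E Bs r p) (h0 : 0 ≤ T₁) (h02 : 0 ≤ T₂) :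
    MultiHopFeasible n T₂ E Bs r (fun i => (Iic T₁).indicator (p i)) := by
  obtain ⟨hint, hrint, hnonneg, henergy, hsource, hrelay⟩ := hp
  have hmin : ∀ t ∈ Icc 0 T₂, min t T₁ ∈ Icc 0 T₁ :=
    fun t ht => ⟨le_min ht.1 h0, min_le_right _ _⟩
  have hmin_le : ∀ t ∈ Icc 0 T₂, min t T₁ ≤ t := fun t _ => min_le_left _ _
  have hrate : ∀ i ≤ n, ∀ t ∈ Icc 0 T₂, ∫ s in (0:ℝ)..t, r i ((Iic T₁).indicator (p i) s)
      = ∫ s in (0:ℝ)..min t T₁, r i (p i s) :=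
    fun i hi t ht => integral_comp_indicator_Iic (hr0 i hi) ht.1 h0
  refine ⟨fun i hi => (hint i hi).indicator_Iic h02, fun i hi => ?_, fun i hi t ht => ?_,
    fun i hi t ht => ?_, fun t ht => ?_, fun i hi t ht => ?_⟩
  · simp_rw [← Function.comp_apply (f := r i), ← indicator_comp_of_zero (hr0 i hi)]
    exact (hrint i hi).indicator_Iic h02
  · by_cases htT₁ : t ≤ T₁
    · simpa [htT₁] using hnonneg i hi t ⟨ht.1, htT₁⟩
    · simp [htT₁]
  · rw [integral_indicator_Iic ht.1 h0]
    exact (henergy i hi _ (hmin t ht)).trans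
      (hE_mono i hi (hmin t ht).1 ht.1 (hmin_le t ht))
  · rw [hrate 0 n.zero_le t ht]
    exact (hsource _ (hmin t ht)).trans (hBs_mono (hmin t ht).1 ht.1 (hmin_le t ht))
  · rw [hrate (i + 1) hi t ht, hrate i (Nat.le_of_succ_le hi) t ht]
    exact hrelay i hi _ (hmin t ht)

lemma MultiHopFeasible.integral_rate_le (hrn : IsRateFunction (r n))
    (hp : MultiHopFeasible n T₂ E Bs r p) (h0 : 0 ≤ T₁) (h12 : T₁ ≤ T₂) {a : ℝ} (ha : 0 < a) :
    ∫ t in T₁..T₂, r n (p n t) ≤ (T₂ - T₁) * r n a + r n a / a * E n T₂ := by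
  obtain ⟨hint, hrint, hnonneg, henergy, -, -⟩ := hp
  have h02 : 0 ≤ T₂ := h0.trans h12
  have hsub : uIcc T₁ T₂ ⊆ uIcc 0 T₂ := by
    rw [uIcc_of_le h12, uIcc_of_le h02]
    exact Icc_subset_Icc_left h0
  have hsplit := integral_add_adjacent_intervals
    ((hint n le_rfl).mono_set (uIcc_subset_uIcc_left (mem_uIcc_of_le h0 h12)))
    ((hint n le_rfl).mono_set hsub)
  have hhead : 0 ≤ ∫ t in (0:ℝ)..T₁, p n t :=
    integral_nonneg h0 fun t ht => hnonneg n le_rfl t ⟨ht.1, ht.2.trans h12⟩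
  have htail : ∫ t in T₁..T₂, p n t ≤ E n T₂ := by
    linarith [henergy n le_rfl T₂ ⟨h02, le_rfl⟩]
  calc ∫ t in T₁..T₂, r n (p n t)
      ≤ (T₂ - T₁) * r n a + r n a / a * ∫ t in T₁..T₂, p n t :=
        hrn.integral_comp_le ha h12 ((hint n le_rfl).mono_set hsub)
          ((hrint n le_rfl).mono_set hsub)
          fun t ht => hnonneg n le_rfl t ⟨h0.trans ht.1, ht.2⟩
    _ ≤ (T₂ - T₁) * r n a + r n a / a * E n T₂ := by
        gcongr
        exact div_nonneg (hrn.nonneg ha.le) ha.le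

end Feasibility

section Throughput

variable {n : ℕ} {E : ℕ → ℝ → ℝ} {Bs : ℝ → ℝ} {r : ℕ → ℝ → ℝ} {T T₁ T₂ : ℝ}

local notation "D" => MultiHopThroughput n E Bs r

lemma le_multiHopThroughput (hrn : IsRateFunction (r n)) (hT : 0 ≤ T) {p : ℕ → ℝ → ℝ}
    (hp : MultiHopFeasible n T E Bs r p) : ∫ t in (0:ℝ)..T, r n (p n t) ≤ D T := by
  refine le_csSup ⟨T * r n 1 + r n 1 / 1 * E n T, ?_⟩ ⟨p, hp, rfl⟩
  rintro _ ⟨q, hq, rfl⟩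
  simpa using hq.integral_rate_le hrn le_rfl hT one_pos

lemma multiHopThroughput_le (hE : ∀ i ≤ n, ∀ t : ℝ, 0 ≤ t → 0 ≤ E i t)
    (hBs : ∀ t : ℝ, 0 ≤ t → 0 ≤ Bs t) (hr0 : ∀ i ≤ n, r i 0 = 0) {c : ℝ}
    (h : ∀ p, MultiHopFeasible n T E Bs r p → ∫ t in (0:ℝ)..T, r n (p n t) ≤ c) : D T ≤ c := by
  refine csSup_le ⟨_, 0, multiHopFeasible_zero hE hBs hr0 T, rfl⟩ ?_
  rintro _ ⟨p, hp, rfl⟩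
  exact h p hp

variable (hE : ∀ i ≤ n, ∀ t : ℝ, 0 ≤ t → 0 ≤ E i t) (hBs : ∀ t : ℝ, 0 ≤ t → 0 ≤ Bs t)
  (hr0 : ∀ i ≤ n, r i 0 = 0) (hrn : IsRateFunction (r n))
include hE hBs hr0 hrn

lemma multiHopThroughput_zero : D 0 = 0 :=
  le_antisymm (multiHopThroughput_le hE hBs hr0 fun _ _ => by simp)
    (by simpa using le_multiHopThroughput hrn le_rfl (multiHopFeasible_zero hE hBs hr0 0))

lemma monotoneOn_multiHopThroughput (hE_mono : ∀ i ≤ n, MonotoneOn (E i) (Ici 0))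
    (hBs_mono : MonotoneOn Bs (Ici 0)) : MonotoneOn D (Ici 0) := by
  intro T₁ h0 T₂ h02 h12
  refine multiHopThroughput_le hE hBs hr0 fun p hp => ?_
  have hq := hp.indicator_Iic hE_mono hBs_mono hr0 h0 h02
  calc ∫ t in (0:ℝ)..T₁, r n (p n t)
      = ∫ t in (0:ℝ)..T₂, r n ((Iic T₁).indicator (p n) t) := by
        rw [integral_comp_indicator_Iic (hr0 n le_rfl) h02 h0, min_eq_right h12]
    _ ≤ D T₂ := le_multiHopThroughput hrn h02 hq

lemma multiHopThroughput_le_add (h0 : 0 ≤ T₁) (h12 : T₁ ≤ T₂) {a : ℝ} (ha : 0 < a) :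
    D T₂ ≤ D T₁ + (T₂ - T₁) * r n a + r n a / a * E n T₂ := by
  refine multiHopThroughput_le hE hBs hr0 fun p hp => ?_
  have hrint := hp.2.1 n le_rfl
  rw [← integral_add_adjacent_intervals
    (hrint.mono_set (uIcc_subset_uIcc_left (mem_uIcc_of_le h0 h12)))
    (hrint.mono_set (uIcc_subset_uIcc_right (mem_uIcc_of_le h0 h12)))]
  linarith [le_multiHopThroughput hrn h0 (hp.mono h0 h12), hp.integral_rate_le hrn h0 h12 ha]

lemma abs_multiHopThroughput_sub_le (hE_mono : ∀ i ≤ n, MonotoneOn (E i) (Ici 0))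
    (hBs_mono : MonotoneOn Bs (Ici 0)) (h₁ : 0 ≤ T₁) (h₂ : 0 ≤ T₂) {a M : ℝ} (ha : 0 < a)
    (hM₁ : E n T₁ ≤ M) (hM₂ : E n T₂ ≤ M) :
    |D T₁ - D T₂| ≤ r n a * |T₁ - T₂| + r n a / a * M := by
  wlog h12 : T₁ ≤ T₂ generalizing T₁ T₂
  · rw [abs_sub_comm, abs_sub_comm T₁]
    exact this h₂ h₁ hM₂ hM₁ (le_of_not_ge h12)
  have hmono := monotoneOn_multiHopThroughput hE hBs hr0 hrn hE_mono hBs_mono h₁ h₂ h12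
  have hadd := multiHopThroughput_le_add hE hBs hr0 hrn h₁ h12 ha
  have hslope : 0 ≤ r n a / a := div_nonneg (hrn.nonneg ha.le) ha.le
  rw [abs_sub_comm, abs_of_nonneg (sub_nonneg.mpr hmono), abs_sub_comm,
    abs_of_nonneg (sub_nonneg.mpr h12)]
  nlinarith

lemma continuousOn_multiHopThroughput (hE_mono : ∀ i ≤ n, MonotoneOn (E i) (Ici 0))
    (hBs_mono : MonotoneOn Bs (Ici 0))
    (hsub : Tendsto (fun x => r n x / x) atTop (𝓝 0)) : ContinuousOn D (Ici 0) := by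
  intro T₀ hT₀
  refine continuousWithinAt_of_dist_le_mul_add fun ε hε => ?_
  set M := E n (T₀ + 1)
  have hlim : Tendsto (fun x => r n x / x * M) atTop (𝓝 0) := by
    simpa using hsub.mul_const M
  obtain ⟨a, haε, ha⟩ :=
    ((hlim.eventually (gt_mem_nhds hε)).and (eventually_gt_atTop 0)).exists
  have hM : ∀ t ∈ Icc 0 (T₀ + 1), E n t ≤ M :=
    fun t ht => hE_mono n le_rfl ht.1 (mem_Ici.mpr (add_nonneg hT₀ zero_le_one)) ht.2
  refine ⟨r n a, ?_⟩
  filter_upwards [self_mem_nhdsWithin, nhdsWithin_le_nhds (gt_mem_nhds (lt_add_one T₀))]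
    with T hT hT₁
  rw [Real.dist_eq, Real.dist_eq]
  have := abs_multiHopThroughput_sub_le hE hBs hr0 hrn hE_mono hBs_mono hT hT₀ ha
    (hM T ⟨hT, hT₁.le⟩) (hM T₀ ⟨hT₀, by linarith⟩)
  linarith

end Throughput

section LevelSets

variable {D : ℝ → ℝ} {B₀ : ℝ}

lemma isLeast_sInf_levelSet (hcont : ContinuousOn D (Ici 0)) (h0 : D 0 ≠ B₀)
    (hne : {t | 0 < t ∧ D t = B₀}.Nonempty) :
    IsLeast {t | 0 < t ∧ D t = B₀} (sInf {t | 0 < t ∧ D t = B₀}) := by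
  have hC : {t | 0 < t ∧ D t = B₀} = Ici 0 ∩ D ⁻¹' {B₀} := by
    ext t
    refine ⟨fun ht => ⟨ht.1.le, ht.2⟩, fun ⟨ht, hDt⟩ => ⟨?_, hDt⟩⟩
    exact lt_of_le_of_ne ht fun h => h0 (h ▸ hDt)
  have hbdd : BddBelow {t | 0 < t ∧ D t = B₀} := ⟨0, fun t ht => ht.1.le⟩
  refine ⟨?_, fun t ht => csInf_le hbdd ht⟩
  have hclosed : IsClosed (Ici 0 ∩ D ⁻¹' {B₀}) :=
    hcont.preimage_isClosed_of_isClosed isClosed_Ici isClosed_singleton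
  rw [hC] at hne hbdd ⊢
  exact hclosed.csInf_mem hne hbdd

lemma isLeast_superlevelSet_of_isLeast_levelSet (hmono : MonotoneOn D (Ioi 0)) {T₀ : ℝ}
    (hT₀ : IsLeast {t | 0 < t ∧ D t = B₀} T₀) : IsLeast {T | 0 < T ∧ B₀ ≤ D T} T₀ := by
  obtain ⟨⟨hT₀pos, hDT₀⟩, hleast⟩ := hT₀
  refine ⟨⟨hT₀pos, hDT₀.ge⟩, fun T ⟨hT, hB⟩ => le_of_not_gt fun hlt => hlt.not_ge ?_⟩
  exact hleast ⟨hT, le_antisymm (hDT₀ ▸ hmono hT hT₀pos hlt.le) hB⟩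

end LevelSets

theorem multihop_completion_time_general
    (n : ℕ) (E : ℕ → ℝ → ℝ) (Bs : ℝ → ℝ) (r : ℕ → ℝ → ℝ)
    (hE_nonneg : ∀ i ≤ n, ∀ t : ℝ, 0 ≤ t → 0 ≤ E i t)
    (hE_mono : ∀ i ≤ n, MonotoneOn (E i) (Set.Ici 0))
    (hBs_nonneg : ∀ t : ℝ, 0 ≤ t → 0 ≤ Bs t) (hBs_mono : MonotoneOn Bs (Set.Ici 0))
    (hr : ∀ i ≤ n, IsRateFunction (r i))
    (hrn_sublinear : Filter.Tendsto (fun p => r n p / p) Filter.atTop (nhds 0))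
    (B₀ : ℝ) (hB₀ : 0 < B₀) :
    (∀ T₁ T₂ : ℝ, 0 < T₁ → T₁ ≤ T₂ →
      MultiHopThroughput n E Bs r T₁ ≤ MultiHopThroughput n E Bs r T₂) ∧
    ContinuousOn (MultiHopThroughput n E Bs r) (Set.Ioi 0) ∧
    (∀ C : Set ℝ, C = {t : ℝ | 0 < t ∧ MultiHopThroughput n E Bs r t = B₀} →
      C.Nonempty →
      MultiHopThroughput n E Bs r (sInf C) = B₀ ∧
      sInf C = sInf {T : ℝ | 0 < T ∧ B₀ ≤ MultiHopThroughput n E Bs r T} ∧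
      (∀ T : ℝ, 0 < T → ∀ p : ℕ → ℝ → ℝ, MultiHopFeasible n T E Bs r p →
        B₀ ≤ (∫ t in (0:ℝ)..T, r n (p n t)) → sInf C ≤ T)) := by
  have hr0 : ∀ i ≤ n, r i 0 = 0 := fun i hi => (hr i hi).map_zero
  have hrn := hr n le_rfl
  have hmono := monotoneOn_multiHopThroughput hE_nonneg hBs_nonneg hr0 hrn hE_mono hBs_mono
  have hcont :=
    continuousOn_multiHopThroughput hE_nonneg hBs_nonneg hr0 hrn hE_mono hBs_mono hrn_sublinear
  have hD0 : MultiHopThroughput n E Bs r 0 ≠ B₀ := by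
    rw [multiHopThroughput_zero hE_nonneg hBs_nonneg hr0 hrn]
    exact hB₀.ne
  refine ⟨fun T₁ T₂ h₁ h₁₂ => hmono h₁.le (h₁.le.trans h₁₂) h₁₂,
    hcont.mono Ioi_subset_Ici_self, ?_⟩
  rintro C rfl hne
  have hC := isLeast_sInf_levelSet hcont hD0 hne
  have hS := isLeast_superlevelSet_of_isLeast_levelSet (hmono.mono Ioi_subset_Ici_self) hC
  exact ⟨hC.1.2, hS.csInf_eq.symm,
    fun T hT p hp hB => hS.2 ⟨hT, hB.trans (le_multiHopThroughput hrn hT.le hp)⟩⟩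

/-- Corollary 2: in a multi-hop channel with `n` relays, the maximum throughput
`D` is nondecreasing and continuous on `(0,∞)`, and if the level set
`C = {t > 0 : D(t) = B₀}` is nonempty then `T_min = inf C` is attained and is
the minimum completion time for delivering `B₀` units of data. -/
theorem multihop_completion_time
    (n : ℕ) (E : ℕ → ℝ → ℝ) (Bs : ℝ → ℝ) (r : ℕ → ℝ → ℝ)
    (hE_nonneg : ∀ i ≤ n, ∀ t : ℝ, 0 ≤ t → 0 ≤ E i t)
    (hE_mono : ∀ i ≤ n, MonotoneOn (E i) (Set.Ici 0))
    (hEn_bdd : ∀ T : ℝ, 0 < T → ∃ M : ℝ, ∀ t ∈ Set.Icc (0:ℝ) T, E n t ≤ M)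
    (hBs_nonneg : ∀ t : ℝ, 0 ≤ t → 0 ≤ Bs t) (hBs_mono : MonotoneOn Bs (Set.Ici 0))
    (hr : ∀ i ≤ n, IsRateFunction (r i))
    (hrn_sublinear : Filter.Tendsto (fun p => r n p / p) Filter.atTop (nhds 0))
    (B₀ : ℝ) (hB₀ : 0 < B₀) :
    (∀ T₁ T₂ : ℝ, 0 < T₁ → T₁ ≤ T₂ →
      MultiHopThroughput n E Bs r T₁ ≤ MultiHopThroughput n E Bs r T₂) ∧
    ContinuousOn (MultiHopThroughput n E Bs r) (Set.Ioi 0) ∧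
    (∀ C : Set ℝ, C = {t : ℝ | 0 < t ∧ MultiHopThroughput n E Bs r t = B₀} →
      C.Nonempty →
      MultiHopThroughput n E Bs r (sInf C) = B₀ ∧
      sInf C = sInf {T : ℝ | 0 < T ∧ B₀ ≤ MultiHopThroughput n E Bs r T} ∧
      (∀ T : ℝ, 0 < T → ∀ p : ℕ → ℝ → ℝ, MultiHopFeasible n T E Bs r p →
        B₀ ≤ (∫ t in (0:ℝ)..T, r n (p n t)) → sInf C ≤ T)) :=
  multihop_completion_time_general n E Bs r hE_nonneg hE_mono hBs_nonneg hBs_mono hr hrn_sublinear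
    B₀ hB₀
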